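/- For finite common independent sets I and J of M and N: I ⊴ J if and only if there exists a finite common independent set J' with J' ∼ J and J' ∈ A(I). -/

import Mathlib

/-!
An augmenting path `P` for `I` alternates between `M`-exchange arcs and `N`-exchange arcs, and
the absence of jumping arcs makes each family of exchanges triangular, hence realisable one at a
time; so `I △ P` is a common independent set, one larger than `I`, that still spans `I` in both
matroids. This gives `I ⊴ J'` for every `J' ∈ A(I)`, hence the backward direction by transitivity.
Conversely, while `|I| < |J|` and `I ⊴ J`, a shortest path in `D(I)` inside
`span_M(J) ∩ span_N(J)` is augmenting (a reachability argument shows one exists); augmenting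
along it keeps `I ⊴ J`. Once `|J| ≤ |I|`, rank forces `J ⊴ I`.
-/

open Set Matroid
open scoped symmDiff

namespace AZ

variable {α : Type*}

/-- The contraction `M / X`, defined (in the standard way) as the dual of the
restriction of the dual to the complement of `X`. -/
def con (M : Matroid α) (X : Set α) : Matroid α := (M✶ ↾ (M.E \ X))✶

/-- The deletion `M − X := M ↾ (E ∖ X)`. -/
def del (M : Matroid α) (X : Set α) : Matroid α := M ↾ (M.E \ X)

/-- The matroidal Hall condition `Hall(M,N)`: for every `X ⊆ E` such that `M ↾ X` has a
base that is independent in `N.X = N/(E∖X)`, also `N.X` has a base independent in `M ↾ X`. -/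
def Hall (M N : Matroid α) : Prop :=
  ∀ X ⊆ N.E,
    (∃ B, (M ↾ X).IsBase B ∧ (con N (N.E \ X)).Indep B) →
    ∃ B, (con N (N.E \ X)).IsBase B ∧ (M ↾ X).Indep B

/-- `(M,N)` is finitely matchable: every finite `F ⊆ E` is `N`-spanned by an
`M`-independent set. -/
def FinitelyMatchable (M N : Matroid α) : Prop :=
  ∀ F ⊆ M.E, F.Finite → ∃ I, M.Indep I ∧ F ⊆ N.closure I

/-- `G ⊆ E` is `(M,N)`-negligible: for all finite `X ⊆ G` and finite `Y ⊆ E ∖ G` there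
is an `M/Y`-independent set that `N`-spans `X`. -/
def Negligible (M N : Matroid α) (G : Set α) : Prop :=
  G ⊆ M.E ∧
    ∀ X ⊆ G, X.Finite → ∀ Y ⊆ M.E \ G, Y.Finite →
      ∃ I, (con M Y).Indep I ∧ X ⊆ N.closure I

/-- A common independent set `I` of `M` and `N` is `(M,N)`-stable if every `J ⊆ E ∖ I`
that is independent in `M/I` and in `N` is also independent in `N/I`. -/
def Stable (M N : Matroid α) (I : Set α) : Prop :=
  M.Indep I ∧ N.Indep I ∧
    ∀ J ⊆ M.E \ I, (con M I).Indep J → N.Indep J → (con N I).Indep J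

/-- A circuit of a matroid: a minimal dependent subset of the ground set. -/
def Circuit (M : Matroid α) (C : Set α) : Prop :=
  C ⊆ M.E ∧ ¬ M.Indep C ∧ ∀ D ⊂ C, M.Indep D

/-- The arc relation of the exchange digraph `D(I)`: for `x ∈ E ∖ I` and `y ∈ I` there is
an arc `x → y` if `x ∈ span_M(I)` and `y` lies in the unique `M`-circuit contained in
`I + x`, and an arc `y → x` if `x ∈ span_N(I)` and `y` lies in the unique `N`-circuit
contained in `I + x`. -/
def Arc (M N : Matroid α) (I : Set α) (x y : α) : Prop :=
  (x ∈ M.E \ I ∧ y ∈ I ∧ x ∈ M.closure I ∧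
    ∃ C, Circuit M C ∧ C ⊆ insert x I ∧ x ∈ C ∧ y ∈ C) ∨
  (x ∈ I ∧ y ∈ M.E \ I ∧ y ∈ N.closure I ∧
    ∃ C, Circuit N C ∧ C ⊆ insert y I ∧ y ∈ C ∧ x ∈ C)

/-- `Reach M N I x` is `E(x,I)`: the set of elements reachable from `x` by a directed
path in `D(I)`. -/
def Reach (M N : Matroid α) (I : Set α) (x : α) : Set α :=
  {y | Relation.ReflTransGen (Arc M N I) x y}

/-- `P = {f 0, …, f (2n)}` is an `xy`-augmenting path for `I`: it starts at
`x = f 0 ∉ span_N(I)`, ends at `y = f (2n) ∉ span_M(I)`, consecutive elements are joined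
by arcs of `D(I)`, and there are no jumping arcs. -/
def IsAugPath (M N : Matroid α) (I P : Set α) (x y : α) : Prop :=
  ∃ (n : ℕ) (f : ℕ → α),
    P = f '' Set.Iic (2 * n) ∧ P ⊆ M.E ∧ Set.InjOn f (Set.Iic (2 * n)) ∧
    f 0 = x ∧ f (2 * n) = y ∧
    x ∉ N.closure I ∧ y ∉ M.closure I ∧
    (∀ i < 2 * n, Arc M N I (f i) (f (i + 1))) ∧
    (∀ i j, i + 1 < j → j ≤ 2 * n → ¬ Arc M N I (f i) (f j))

/-- One augmentation step: `J = I △ P` for some augmenting path `P` for `I`. -/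
def AugStep (M N : Matroid α) (I J : Set α) : Prop :=
  ∃ P x y, IsAugPath M N I P x y ∧ J = I ∆ P

/-- `J ∈ A(I)`: `J` is obtained from `I` by finitely many successive augmentations. -/
def MemA (M N : Matroid α) (I J : Set α) : Prop :=
  Relation.ReflTransGen (AugStep M N) I J

/-- `O = {f 0, …, f (2n+1)}` is a switching cycle for `I`: the arcs of `D(I)` inside `O`
are exactly the arcs `f i → f (i+1 mod 2n+2)`, forming a chordless directed cycle. -/
def SwitchCycle (M N : Matroid α) (I O : Set α) : Prop :=
  ∃ (n : ℕ) (f : ℕ → α),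
    O = f '' Set.Iio (2 * n + 2) ∧ O ⊆ M.E ∧ Set.InjOn f (Set.Iio (2 * n + 2)) ∧
    ∀ i < 2 * n + 2, ∀ j < 2 * n + 2,
      (Arc M N I (f i) (f j) ↔ j = (i + 1) % (2 * n + 2))

/-- The preorder on finite common independent sets: `I ⊴ J` iff
`I ⊆ span_M(J) ∩ span_N(J)`. -/
def Le (M N : Matroid α) (I J : Set α) : Prop :=
  I ⊆ M.closure J ∩ N.closure J

/-- The equivalence relation: `I ∼ J` iff `I ⊴ J` and `J ⊴ I`. -/
def Sim (M N : Matroid α) (I J : Set α) : Prop :=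
  Le M N I J ∧ Le M N J I

/-- A family of finite common independent sets of `M` and `N` that is closed under `∼`
and is `⊴`-directed. -/
def DirFam (M N : Matroid α) (D : Set (Set α)) : Prop :=
  (∀ I ∈ D, I.Finite ∧ M.Indep I ∧ N.Indep I) ∧
  (∀ I ∈ D, ∀ J, J.Finite → M.Indep J → N.Indep J → Sim M N I J → J ∈ D) ∧
  (∀ I ∈ D, ∀ J ∈ D, ∃ K ∈ D, Le M N I K ∧ Le M N J K)

/-- A maximal directed family of finite common independent sets. -/
def MaxDirFam (M N : Matroid α) (D : Set (Set α)) : Prop :=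
  DirFam M N D ∧ ∀ D', DirFam M N D' → D ⊆ D' → D' = D

end AZ

namespace Matroid

variable {α : Type*} {M : Matroid α} {I J K : Set α} {x y : α}

lemma Indep.encard_le_encard_of_subset_closure (hI : M.Indep I) (hIJ : I ⊆ M.closure J) :
    I.encard ≤ J.encard :=
  calc I.encard = M.eRk I := hI.eRk_eq_encard.symm
    _ ≤ M.eRk (M.closure J) := M.eRk_mono hIJ
    _ = M.eRk J := M.eRk_closure_eq J
    _ ≤ J.encard := M.eRk_le_encard J

lemma Indep.subset_closure_of_encard_le (hI : M.Indep I) (hIfin : I.Finite)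
    (hIJ : I ⊆ M.closure J) (hJ : J ⊆ M.E) (hJI : J.encard ≤ I.encard) : J ⊆ M.closure I := by
  intro y hyJ
  by_contra hyI
  have hins : M.Indep (insert y I) := hI.insert_indep_iff.2 (.inl ⟨hJ hyJ, hyI⟩)
  have hcard := hins.encard_le_encard_of_subset_closure
    (insert_subset (M.subset_closure J hJ hyJ) hIJ)
  rw [encard_insert_of_notMem (fun h ↦ hyI (M.subset_closure I hI.subset_ground h))] at hcard
  exact (ENat.add_one_le_iff hIfin.encard_lt_top.ne).1 (hcard.trans hJI) |>.false

lemma Indep.exchange_fundCircuit (hK : M.Indep K) (hx : x ∈ M.closure K) (hxK : x ∉ K)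
    (hy : y ∈ M.fundCircuit x K) :
    M.Indep (insert x K \ {y}) ∧ M.closure (insert x K \ {y}) = M.closure K := by
  refine ⟨(hK.mem_fundCircuit_iff hx hxK).1 hy, ?_⟩
  have hycl : y ∈ M.closure (insert x K \ {y}) :=
    M.closure_subset_closure (sdiff_subset_sdiff_left (M.fundCircuit_subset_insert x K))
      ((hK.fundCircuit_isCircuit hx hxK).mem_closure_sdiff_singleton_of_mem hy)
  rw [closure_sdiff_singleton_eq_closure hycl, closure_insert_eq_of_mem_closure hx]

lemma Indep.mem_closure_of_fundCircuit_subset (hI : M.Indep I) (hx : x ∈ M.closure I)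
    (hxI : x ∉ I) {X : Set α} (hX : M.fundCircuit x I \ {x} ⊆ X) : x ∈ M.closure X :=
  M.closure_subset_closure hX
    ((hI.fundCircuit_isCircuit hx hxI).mem_closure_sdiff_singleton_of_mem (M.mem_fundCircuit x I))

/-- The exchanges can be made one at a time, starting from the last pair: its `y` avoids the
earlier fundamental circuits, which therefore survive that exchange. -/
lemma Indep.exchange_of_triangular (hK : M.Indep K) {x y : ℕ → α} {k : ℕ}
    (hx : ∀ i < k, x i ∈ M.closure K \ K) (hy : ∀ i < k, y i ∈ K ∩ M.fundCircuit (x i) K)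
    (htri : ∀ i j, i < j → j < k → y j ∉ M.fundCircuit (x i) K) :
    M.Indep ((K \ y '' Iio k) ∪ x '' Iio k) ∧
      M.closure ((K \ y '' Iio k) ∪ x '' Iio k) = M.closure K := by
  induction k generalizing K with
  | zero => simpa using hK
  | succ k ih =>
    obtain ⟨hxk, hxkK⟩ := hx k k.lt_succ_self
    obtain ⟨hK', hcl'⟩ := hK.exchange_fundCircuit hxk hxkK (hy k k.lt_succ_self).2
    have hC : ∀ i < k, M.fundCircuit (x i) (insert (x k) K \ {y k}) = M.fundCircuit (x i) K := by
      intro i hi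
      obtain ⟨hxi, hxiK⟩ := hx i (by omega)
      refine ((hK.fundCircuit_isCircuit hxi hxiK).eq_fundCircuit_of_subset hK' ?_).symm
      intro e he
      obtain rfl | heK := M.fundCircuit_subset_insert _ _ he
      · exact .inl rfl
      · exact .inr ⟨.inr heK, by rintro rfl; exact htri i k hi k.lt_succ_self he⟩
    have hx' : ∀ i < k, x i ∈ M.closure (insert (x k) K \ {y k}) \ (insert (x k) K \ {y k}) := by
      intro i hi
      obtain ⟨hxi, hxiK⟩ := hx i (by omega)
      refine ⟨hcl' ▸ hxi, fun hxi' ↦ ?_⟩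
      obtain hxx | hxiK' := hxi'.1
      · exact htri i k hi k.lt_succ_self (hxx ▸ (hy k k.lt_succ_self).2)
      · exact hxiK hxiK'
    have hy' : ∀ i < k, y i ∈ (insert (x k) K \ {y k}) ∩
        M.fundCircuit (x i) (insert (x k) K \ {y k}) := by
      intro i hi
      obtain ⟨hyK, hyC⟩ := hy i (by omega)
      refine ⟨⟨.inr hyK, ?_⟩, (hC i hi).symm ▸ hyC⟩
      rintro (h : y i = y k)
      exact htri i k hi k.lt_succ_self (h ▸ hyC)
    obtain ⟨hind, hcl⟩ := ih hK' hx' hy'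
      (fun i j hij hj ↦ hC i (hij.trans hj) ▸ htri i j hij (by omega))
    have hxy : x k ∉ insert (y k) (y '' Iio k) := by
      rintro (h | ⟨i, hi, h⟩)
      · exact hxkK (h ▸ (hy k k.lt_succ_self).1)
      · exact hxkK (h ▸ (hy i (by simp at hi; omega)).1)
    have hset : ((insert (x k) K \ {y k}) \ y '' Iio k) ∪ x '' Iio k =
        (K \ y '' Iio (k + 1)) ∪ x '' Iio (k + 1) := by
      rw [Iio_add_one_eq_Iic, ← Iio_insert, image_insert_eq, image_insert_eq, Set.sdiff_sdiff,
        singleton_union, insert_sdiff_of_notMem _ hxy, insert_union, union_insert]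
    rw [hset] at hind hcl
    exact ⟨hind, hcl.trans hcl'⟩

end Matroid

namespace AZ

variable {α : Type*} {M N : Matroid α} {I J K P : Set α} {x y : α}

lemma circuit_iff_isCircuit {C : Set α} : Circuit M C ↔ M.IsCircuit C := by
  rw [isCircuit_iff_forall_ssubset, dep_iff, Circuit]
  tauto

lemma exists_circuit_iff_mem_fundCircuit (hI : M.Indep I) (hx : x ∈ M.closure I) (hxI : x ∉ I) :
    (∃ C, Circuit M C ∧ C ⊆ insert x I ∧ x ∈ C ∧ y ∈ C) ↔ y ∈ M.fundCircuit x I := by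
  refine ⟨fun ⟨C, hC, hCI, _, hyC⟩ ↦ ?_, fun hy ↦ ?_⟩
  · rwa [← (circuit_iff_isCircuit.1 hC).eq_fundCircuit_of_subset hI hCI]
  · exact ⟨_, circuit_iff_isCircuit.2 (hI.fundCircuit_isCircuit hx hxI),
      M.fundCircuit_subset_insert x I, M.mem_fundCircuit x I, hy⟩

lemma arc_iff_of_notMem (hI : M.Indep I) (hx : x ∉ I) :
    Arc M N I x y ↔ y ∈ I ∧ x ∈ M.closure I ∧ y ∈ M.fundCircuit x I := by
  unfold Arc
  constructor
  · rintro (⟨-, hy, hcl, hC⟩ | ⟨hxI, -⟩)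
    · exact ⟨hy, hcl, (exists_circuit_iff_mem_fundCircuit hI hcl hx).1 hC⟩
    · exact absurd hxI hx
  · rintro ⟨hy, hcl, hC⟩
    exact .inl ⟨⟨M.closure_subset_ground I hcl, hx⟩, hy, hcl,
      (exists_circuit_iff_mem_fundCircuit hI hcl hx).2 hC⟩

lemma arc_iff_of_mem (hE : M.E = N.E) (hI : N.Indep I) (hx : x ∈ I) :
    Arc M N I x y ↔ y ∉ I ∧ y ∈ N.closure I ∧ x ∈ N.fundCircuit y I := by
  unfold Arc
  constructor
  · rintro (⟨⟨-, hxI⟩, -⟩ | ⟨-, ⟨-, hy⟩, hcl, hC⟩)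
    · exact absurd hx hxI
    · exact ⟨hy, hcl, (exists_circuit_iff_mem_fundCircuit hI hcl hy).1 hC⟩
  · rintro ⟨hy, hcl, hC⟩
    exact .inr ⟨hx, ⟨hE ▸ N.closure_subset_ground I hcl, hy⟩, hcl,
      (exists_circuit_iff_mem_fundCircuit hI hcl hy).2 hC⟩

lemma Arc.mem_iff_notMem (h : Arc M N I x y) : x ∈ I ↔ y ∉ I := by
  rcases h with ⟨⟨-, hx⟩, hy, -⟩ | ⟨hx, ⟨-, hy⟩, -⟩ <;> tauto

lemma mem_iff_odd_of_forall_arc {f : ℕ → α} {k : ℕ} (h0 : f 0 ∉ I)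
    (harc : ∀ i < k, Arc M N I (f i) (f (i + 1))) : ∀ i ≤ k, (f i ∈ I ↔ Odd i) := by
  intro i hi
  induction i with
  | zero => simpa using h0
  | succ i ih =>
    rw [← not_iff_not, ← (harc i (by omega)).mem_iff_notMem, ih (by omega), Nat.odd_add_one,
      not_not]

section Walks

variable {β : Type*} {r : β → β → Prop}

lemma exists_walk_of_reflTransGen {a b : β} (h : Relation.ReflTransGen r a b) :
    ∃ k, ∃ f : ℕ → β, f 0 = a ∧ f k = b ∧ ∀ i < k, r (f i) (f (i + 1)) := by
  induction h with
  | refl => exact ⟨0, fun _ ↦ a, rfl, rfl, by simp⟩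
  | @tail c d _ hcd ih =>
    obtain ⟨k, f, h0, hk, hf⟩ := ih
    refine ⟨k + 1, fun i ↦ if i ≤ k then f i else d, by simpa using h0, by simp, fun i hi ↦ ?_⟩
    obtain hik | rfl := (Nat.lt_succ_iff.1 hi).lt_or_eq
    · simpa [hik.le, Nat.succ_le_of_lt hik] using hf i hik
    · simpa [hk] using hcd

lemma exists_walk_of_shortcut {f : ℕ → β} {k i d : ℕ} (hf : ∀ m < k, r (f m) (f (m + 1)))
    (hik : i + d < k) (hr : r (f i) (f (i + d + 1))) :
    ∃ g : ℕ → β, g 0 = f 0 ∧ g (k - d) = f k ∧ ∀ m < k - d, r (g m) (g (m + 1)) := by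
  refine ⟨fun m ↦ if m ≤ i then f m else f (m + d), by simp, ?_, fun m hm ↦ ?_⟩
  · simp only [show ¬ k - d ≤ i by omega, if_false, show k - d + d = k by omega]
  · by_cases hmi : m < i
    · simpa [hmi.le, Nat.succ_le_of_lt hmi] using hf m (by omega)
    obtain rfl | hmi := (not_lt.1 hmi).eq_or_lt
    · simpa [add_right_comm] using hr
    · simpa [show ¬ m ≤ i by omega, show ¬ m + 1 ≤ i by omega, add_right_comm] using
        hf (m + d) (by omega)

lemma exists_shortest_walk {p q : β → Prop}
    (h : ∃ a b, p a ∧ q b ∧ Relation.ReflTransGen r a b) :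
    ∃ k, ∃ f : ℕ → β, p (f 0) ∧ q (f k) ∧ (∀ i < k, r (f i) (f (i + 1))) ∧
      (∀ i j, i + 1 < j → j ≤ k → ¬ r (f i) (f j)) ∧ InjOn f (Iic k) := by
  classical
  have hex : ∃ k, ∃ f : ℕ → β, p (f 0) ∧ q (f k) ∧ ∀ i < k, r (f i) (f (i + 1)) := by
    obtain ⟨a, b, ha, hb, hab⟩ := h
    obtain ⟨k, f, rfl, rfl, hf⟩ := exists_walk_of_reflTransGen hab
    exact ⟨k, f, ha, hb, hf⟩
  obtain ⟨f, hp, hq, hf⟩ := Nat.find_spec hex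
  have hmin := fun m (hm : m < Nat.find hex) ↦ Nat.find_min hex hm
  set k := Nat.find hex
  have hnj : ∀ i j, i + 1 < j → j ≤ k → ¬ r (f i) (f j) := by
    intro i j hij hjk hr
    obtain ⟨g, hg0, hgk, hg⟩ := exists_walk_of_shortcut (i := i) (d := j - i - 1) hf (by omega)
      (by rwa [show i + (j - i - 1) + 1 = j by omega])
    exact hmin (k - (j - i - 1)) (by omega) ⟨g, hg0 ▸ hp, hgk ▸ hq, hg⟩
  refine ⟨k, f, hp, hq, hf, hnj, fun a ha b hb hab ↦ ?_⟩
  simp only [mem_Iic] at ha hb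
  wlog hlt : a < b generalizing a b
  · obtain rfl | hba := (not_lt.1 hlt).eq_or_lt
    · rfl
    · exact (this b a hab.symm hb ha hba).symm
  obtain hbk | rfl := hb.lt_or_eq
  · exact absurd (hab ▸ hf b hbk) (hnj a (b + 1) (by omega) hbk)
  · exact absurd ⟨f, hp, hab ▸ hq, fun i hi ↦ hf i (by omega)⟩ (hmin a hlt)

end Walks

lemma arc_comm (hE : M.E = N.E) : Arc N M I y x ↔ Arc M N I x y := by
  unfold Arc
  rw [hE]
  constructor <;> rintro (⟨h₁, h₂, h₃⟩ | ⟨h₁, h₂, h₃⟩)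
  exacts [.inr ⟨h₂, h₁, h₃⟩, .inl ⟨h₂, h₁, h₃⟩, .inr ⟨h₂, h₁, h₃⟩, .inl ⟨h₂, h₁, h₃⟩]

lemma IsAugPath.swap (hE : M.E = N.E) (h : IsAugPath M N I P x y) : IsAugPath N M I P y x := by
  obtain ⟨n, f, rfl, hPE, hinj, rfl, rfl, hx, hy, harc, hnj⟩ := h
  have hrev : f '' Iic (2 * n) = (fun i ↦ f (2 * n - i)) '' Iic (2 * n) := by
    ext e
    constructor <;> rintro ⟨i, hi, rfl⟩ <;> simp only [mem_Iic] at hi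
    · exact ⟨2 * n - i, by simp, by simp [Nat.sub_sub_self hi]⟩
    · exact ⟨2 * n - i, by simp, rfl⟩
  refine ⟨n, fun i ↦ f (2 * n - i), hrev, hE ▸ hrev ▸ hPE, fun i hi j hj hij ↦ ?_, by simp,
    by simp, hy, hx, fun i hi ↦ ?_, fun i j hij hj ha ↦ ?_⟩
  · simp only [mem_Iic] at hi hj
    have := hinj (by simp : 2 * n - i ∈ Iic (2 * n)) (by simp : 2 * n - j ∈ Iic (2 * n)) hij
    omega
  · have h := harc (2 * n - (i + 1)) (by omega)
    rwa [show 2 * n - (i + 1) + 1 = 2 * n - i by omega, ← arc_comm hE] at h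
  · rw [arc_comm hE] at ha
    exact hnj (2 * n - j) (2 * n - i) (by omega) (by omega) ha

lemma IsAugPath.finite (h : IsAugPath M N I P x y) : P.Finite := by
  obtain ⟨n, f, rfl, -⟩ := h
  exact (finite_Iic _).image f

lemma image_Iic_two_mul (f : ℕ → α) (n : ℕ) :
    f '' Iic (2 * n) =
      (fun i ↦ f (2 * i + 1)) '' Iio n ∪ insert (f (2 * n)) ((fun i ↦ f (2 * i)) '' Iio n) := by
  ext e
  constructor
  · rintro ⟨i, hi, rfl⟩
    rw [mem_Iic] at hi
    obtain ⟨j, rfl | rfl⟩ := Nat.even_or_odd' i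
    · obtain rfl | hj := (show j ≤ n by omega).eq_or_lt
      · exact .inr (.inl rfl)
      · exact .inr (.inr ⟨j, hj, rfl⟩)
    · exact .inl ⟨j, by rw [mem_Iio]; omega, rfl⟩
  · rintro (⟨j, hj, rfl⟩ | rfl | ⟨j, hj, rfl⟩) <;>
      exact mem_image_of_mem f (by simp only [mem_Iio, mem_Iic] at *; omega)

lemma symmDiff_union_eq {Y Z : Set α} (hY : Y ⊆ K) (hZ : Disjoint Z K) :
    K ∆ (Y ∪ Z) = (K \ Y) ∪ Z := by
  ext e
  have hYe : e ∈ Y → e ∈ K := fun h ↦ hY h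
  have hZe : e ∈ Z → e ∉ K := fun h ↦ disjoint_left.1 hZ h
  simp only [Set.mem_symmDiff, mem_union, mem_sdiff]
  tauto

/-- The `M`-arcs `f (2i) → f (2i+1)` of the path form a triangular family of exchanges (there
are no jumping arcs), and the last vertex is `M`-free. -/
lemma IsAugPath.indep_symmDiff (hE : M.E = N.E) (hK : M.Indep K) (hP : IsAugPath M N K P x y) :
    M.Indep (K ∆ P) ∧ K ⊆ M.closure (K ∆ P) ∧ (K ∆ P).encard = K.encard + 1 := by
  obtain ⟨n, f, rfl, hPE, -, rfl, rfl, hx, hy, harc, hnj⟩ := hP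
  have hpar := mem_iff_odd_of_forall_arc
    (fun h ↦ hx (N.subset_closure K (hE ▸ hK.subset_ground) h)) harc
  have heven : ∀ i ≤ n, f (2 * i) ∉ K := fun i hi h ↦
    Nat.not_odd_iff_even.2 (even_two_mul i) ((hpar _ (by omega)).1 h)
  have hodd : ∀ i < n, f (2 * i + 1) ∈ K := fun i hi ↦ (hpar _ (by omega)).2 (odd_two_mul_add_one i)
  have harcM : ∀ i < n, f (2 * i + 1) ∈ K ∧ f (2 * i) ∈ M.closure K ∧
      f (2 * i + 1) ∈ M.fundCircuit (f (2 * i)) K := fun i hi ↦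
    (arc_iff_of_notMem hK (heven i hi.le)).1 (harc (2 * i) (by omega))
  obtain ⟨hB, hclB⟩ := hK.exchange_of_triangular (x := fun i ↦ f (2 * i))
    (y := fun i ↦ f (2 * i + 1)) (k := n)
    (fun i hi ↦ ⟨(harcM i hi).2.1, heven i hi.le⟩)
    (fun i hi ↦ ⟨(harcM i hi).1, (harcM i hi).2.2⟩)
    (fun i j hij hjn hmem ↦ hnj (2 * i) (2 * j + 1) (by omega) (by omega)
      ((arc_iff_of_notMem hK (heven i (by omega))).2
        ⟨hodd j hjn, (harcM i (hij.trans hjn)).2.1, hmem⟩))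
  set B := (K \ (fun i ↦ f (2 * i + 1)) '' Iio n) ∪ (fun i ↦ f (2 * i)) '' Iio n
  have hKP : K ∆ (f '' Iic (2 * n)) = insert (f (2 * n)) B := by
    rw [image_Iic_two_mul, symmDiff_union_eq, union_insert]
    · rintro _ ⟨i, hi, rfl⟩
      exact hodd i hi
    · rw [disjoint_left]
      rintro _ (rfl | ⟨i, hi, rfl⟩)
      exacts [heven n le_rfl, heven i (le_of_lt hi)]
  have hyB : f (2 * n) ∉ M.closure B := hclB ▸ hy
  have hBK : B.encard = K.encard := le_antisymm
    (hB.encard_le_encard_of_subset_closure (hclB ▸ M.subset_closure B hB.subset_ground))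
    (hK.encard_le_encard_of_subset_closure (hclB.symm ▸ M.subset_closure K hK.subset_ground))
  rw [hKP]
  refine ⟨hB.insert_indep_iff.2 (.inl ⟨hPE (mem_image_of_mem f (mem_Iic.2 le_rfl)), hyB⟩),
    (M.subset_closure K hK.subset_ground).trans
      (hclB ▸ M.closure_subset_closure (subset_insert _ _)), ?_⟩
  rw [encard_insert_of_notMem (fun h ↦ hyB (M.subset_closure B hB.subset_ground h)), hBK]

lemma IsAugPath.symmDiff_spec (hE : M.E = N.E) (hKM : M.Indep K) (hKN : N.Indep K)
    (hP : IsAugPath M N K P x y) :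
    M.Indep (K ∆ P) ∧ N.Indep (K ∆ P) ∧ Le M N K (K ∆ P) ∧ (K ∆ P).encard = K.encard + 1 := by
  obtain ⟨hM, hclM, hcard⟩ := hP.indep_symmDiff hE hKM
  obtain ⟨hN, hclN, -⟩ := (hP.swap hE).indep_symmDiff hE.symm hKN
  exact ⟨hM, hN, subset_inter hclM hclN, hcard⟩

lemma exists_augPath_of_reflTransGen (hE : M.E = N.E) (hI : I ⊆ M.E) {S : Set α} (hS : S ⊆ M.E)
    {s t : α} (hs : s ∈ S) (hsN : s ∉ N.closure I) (htM : t ∉ M.closure I)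
    (hst : Relation.ReflTransGen (fun a b ↦ Arc M N I a b ∧ b ∈ S) s t) :
    ∃ P x y, IsAugPath M N I P x y ∧ P ⊆ S := by
  obtain ⟨k, f, ⟨hf0S, hf0⟩, hfk, hwalk, hnj, hinj⟩ :=
    exists_shortest_walk (p := fun a ↦ a ∈ S ∧ a ∉ N.closure I) (q := (· ∉ M.closure I))
      ⟨s, t, ⟨hs, hsN⟩, htM, hst⟩
  have hfS : ∀ i ≤ k, f i ∈ S := by
    rintro (_ | i) hi
    exacts [hf0S, (hwalk i hi).2]
  have hpar := mem_iff_odd_of_forall_arc (fun h ↦ hf0 (N.subset_closure I (hE ▸ hI) h))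
    fun i hi ↦ (hwalk i hi).1
  have hk : Even k := Nat.not_odd_iff_even.1 fun hodd ↦
    hfk (M.subset_closure I hI ((hpar k le_rfl).2 hodd))
  obtain ⟨n, rfl⟩ := hk.two_dvd
  exact ⟨_, _, _, ⟨n, f, rfl, image_subset_iff.2 fun i hi ↦ hS (hfS i hi), hinj, rfl, rfl, hf0,
    hfk, fun i hi ↦ (hwalk i hi).1, fun i j hij hj ha ↦ hnj i j hij hj ⟨ha, hfS j hj⟩⟩,
    image_subset_iff.2 hfS⟩

/-- Without an augmenting path, the set `R` of elements reachable inside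
`S = span_M(J) ∩ span_N(J)` from the `N`-free ones satisfies `R ⊆ span_M(I ∩ R)` and
`S ∖ R ⊆ span_N(I ∖ R)`, which bounds `|J|` by `|I|`. -/
lemma exists_augPath_of_encard_lt (hE : M.E = N.E) (hIM : M.Indep I) (hIN : N.Indep I)
    (hJM : M.Indep J) (hJN : N.Indep J) (hle : Le M N I J) (hcard : I.encard < J.encard) :
    ∃ P x y, IsAugPath M N I P x y ∧ P ⊆ M.closure J ∩ N.closure J := by
  set S := M.closure J ∩ N.closure J
  have hS : S ⊆ M.E := inter_subset_left.trans (M.closure_subset_ground J)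
  have hJS : J ⊆ S := subset_inter (M.subset_closure J hJM.subset_ground)
    (N.subset_closure J hJN.subset_ground)
  by_contra hno
  set R := {z | ∃ s ∈ S, s ∉ N.closure I ∧
    Relation.ReflTransGen (fun a b ↦ Arc M N I a b ∧ b ∈ S) s z}
  have hRM : ∀ z ∈ R, z ∈ M.closure I := fun z ⟨s, hs, hsN, hsz⟩ ↦ by_contra fun hz ↦
    hno (exists_augPath_of_reflTransGen hE hIM.subset_ground hS hs hsN hz hsz)
  have hRstep : ∀ z ∈ R, ∀ w ∈ S, Arc M N I z w → w ∈ R :=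
    fun z ⟨s, hs, hsN, hsz⟩ w hw harc ↦ ⟨s, hs, hsN, hsz.tail ⟨harc, hw⟩⟩
  have hRcl : J ∩ R ⊆ M.closure (I ∩ R) := by
    rintro z ⟨-, hzR⟩
    by_cases hzI : z ∈ I
    · exact M.subset_closure _ (inter_subset_left.trans hIM.subset_ground) ⟨hzI, hzR⟩
    refine hIM.mem_closure_of_fundCircuit_subset (hRM z hzR) hzI fun e ⟨he, hez⟩ ↦ ?_
    have heI : e ∈ I := (M.fundCircuit_subset_insert z I he).resolve_left hez
    exact ⟨heI, hRstep z hzR e (hle heI)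
      ((arc_iff_of_notMem hIM hzI).2 ⟨heI, hRM z hzR, he⟩)⟩
  have hScl : J \ R ⊆ N.closure (I \ R) := by
    rintro z ⟨hzJ, hzR⟩
    by_cases hzI : z ∈ I
    · exact N.subset_closure _ (sdiff_subset.trans hIN.subset_ground) ⟨hzI, hzR⟩
    have hzN : z ∈ N.closure I := by_contra fun h ↦ hzR ⟨z, hJS hzJ, h, .refl⟩
    refine hIN.mem_closure_of_fundCircuit_subset hzN hzI fun e ⟨he, hez⟩ ↦ ?_
    have heI : e ∈ I := (N.fundCircuit_subset_insert z I he).resolve_left hez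
    exact ⟨heI, fun heR ↦ hzR (hRstep e heR z (hJS hzJ)
      ((arc_iff_of_mem hE hIN heI).2 ⟨hzI, hzN, he⟩))⟩
  refine hcard.not_ge ?_
  rw [← encard_sdiff_add_encard_inter J R, ← encard_sdiff_add_encard_inter I R]
  exact add_le_add ((hJN.subset sdiff_subset).encard_le_encard_of_subset_closure hScl)
    ((hJM.subset inter_subset_left).encard_le_encard_of_subset_closure hRcl)

lemma Le.trans (h₁ : Le M N I J) (h₂ : Le M N J K) : Le M N I K := fun _ he ↦
  ⟨M.closure_subset_closure_of_subset_closure (fun _ ha ↦ (h₂ ha).1) (h₁ he).1,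
    N.closure_subset_closure_of_subset_closure (fun _ ha ↦ (h₂ ha).2) (h₁ he).2⟩

lemma Le.sim_of_encard_le (hle : Le M N I J) (hE : M.E = N.E) (hIfin : I.Finite)
    (hIM : M.Indep I) (hIN : N.Indep I) (hJ : J ⊆ M.E) (hcard : J.encard ≤ I.encard) :
    Sim M N I J :=
  ⟨hle, fun _ hj ↦
    ⟨hIM.subset_closure_of_encard_le hIfin (fun _ he ↦ (hle he).1) hJ hcard hj,
      hIN.subset_closure_of_encard_le hIfin (fun _ he ↦ (hle he).2) (hE ▸ hJ) hcard hj⟩⟩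

lemma MemA.le (hE : M.E = N.E) (hIfin : I.Finite) (hIM : M.Indep I) (hIN : N.Indep I)
    (h : MemA M N I K) : K.Finite ∧ M.Indep K ∧ N.Indep K ∧ Le M N I K := by
  induction h with
  | refl => exact ⟨hIfin, hIM, hIN, subset_inter (M.subset_closure I hIM.subset_ground)
      (N.subset_closure I hIN.subset_ground)⟩
  | tail _ hstep ih =>
    obtain ⟨hKfin, hKM, hKN, hIK⟩ := ih
    obtain ⟨P, x, y, hP, rfl⟩ := hstep
    obtain ⟨hM, hN, hle, -⟩ := hP.symmDiff_spec hE hKM hKN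
    exact ⟨hKfin.symmDiff hP.finite, hM, hN, hIK.trans hle⟩

lemma exists_sim_memA_of_le (hE : M.E = N.E) (hIfin : I.Finite) (hIM : M.Indep I)
    (hIN : N.Indep I) (hJfin : J.Finite) (hJM : M.Indep J) (hJN : N.Indep J) (hle : Le M N I J) :
    ∃ J', J'.Finite ∧ M.Indep J' ∧ N.Indep J' ∧ Sim M N J' J ∧ MemA M N I J' := by
  obtain ⟨d, hd⟩ : ∃ d : ℕ, J.encard ≤ I.encard + d :=
    ⟨J.ncard, hJfin.cast_ncard_eq ▸ le_add_self⟩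
  induction d generalizing I with
  | zero =>
    exact ⟨I, hIfin, hIM, hIN,
      hle.sim_of_encard_le hE hIfin hIM hIN hJM.subset_ground (by simpa using hd), .refl⟩
  | succ d ih =>
    by_cases hc : J.encard ≤ I.encard
    · exact ⟨I, hIfin, hIM, hIN, hle.sim_of_encard_le hE hIfin hIM hIN hJM.subset_ground hc, .refl⟩
    obtain ⟨P, x, y, hP, hPJ⟩ :=
      exists_augPath_of_encard_lt hE hIM hIN hJM hJN hle (not_le.1 hc)
    obtain ⟨hM, hN, -, hcard⟩ := hP.symmDiff_spec hE hIM hIN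
    obtain ⟨J', hJ'fin, hJ'M, hJ'N, hsim, hmem⟩ := ih (hIfin.symmDiff hP.finite) hM hN
      (symmDiff_subset_union.trans (union_subset hle hPJ))
      (by rw [hcard, add_right_comm, add_assoc]; simpa [add_comm] using hd)
    exact ⟨J', hJ'fin, hJ'M, hJ'N, hsim, .head ⟨P, x, y, hP, rfl⟩ hmem⟩

theorem statement15_general (M N : Matroid α) (hE : M.E = N.E)
    (I J : Set α) (hIfin : I.Finite) (hIM : M.Indep I) (hIN : N.Indep I)
    (hJfin : J.Finite) (hJM : M.Indep J) (hJN : N.Indep J) :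
    Le M N I J ↔
      ∃ J', J'.Finite ∧ M.Indep J' ∧ N.Indep J' ∧ Sim M N J' J ∧ MemA M N I J' := by
  refine ⟨exists_sim_memA_of_le hE hIfin hIM hIN hJfin hJM hJN, ?_⟩
  rintro ⟨J', -, -, -, hsim, hmem⟩
  exact (hmem.le hE hIfin hIM hIN).2.2.2.trans hsim.1

/-- `I ⊴ J` iff some `J' ∼ J` belongs to `A(I)`. -/
theorem statement15 (M N : Matroid α) [M.Finitary] [N.Finitary] (hE : M.E = N.E)
    (I J : Set α) (hIfin : I.Finite) (hIM : M.Indep I) (hIN : N.Indep I)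
    (hJfin : J.Finite) (hJM : M.Indep J) (hJN : N.Indep J) :
    Le M N I J ↔
      ∃ J', J'.Finite ∧ M.Indep J' ∧ N.Indep J' ∧ Sim M N J' J ∧ MemA M N I J' :=
  statement15_general M N hE I J hIfin hIM hIN hJfin hJM hJN

end AZ
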